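/- arXiv:2502.05149 — 2 statements merged into one kernel-verified Lean document; each statement's English description precedes it below -/
import Mathlib

section
/- Let d ≥ 1, ε > 0 and ρ_ε a finite-horizon kernel. A set E ⊆ ℝ^d of finite 𝔓_ε-perimeter is ε-decomposable if and only if there exists a partition {E₁, E₂} of E with |E₁| > 0, |E₂| > 0 and dist^e(E₁, E₂) ≥ ε. -/
/-!
For disjoint `E₁, E₂` the perimeters split as
`𝔓(E₁) + 𝔓(E₂) = 𝔓(E₁ ∪ E₂) + 2 (L(E₁, E₂) + L(E₂, E₁))`, where `L(F, G)` is the interaction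
`∫_F ∫_G ρ(x - y) / |x - y|`; for a set of finite perimeter, decomposability therefore means that
the interaction between the two pieces vanishes, i.e. `x - y ∉ supp ρ` for almost every
`(x, y) ∈ E₁ × E₂`. If the essential supports are `ε` apart this holds because `supp ρ` lies
essentially in the closed `ε`-ball and spheres are null. Conversely, if `x₀, y₀` in the essential
supports satisfy `|x₀ - y₀| < ε`, localize to `F = E₁ ∩ B_δ(x₀)`, `G = E₂ ∩ B_δ(y₀)`: by Fubini the
measure of `{(x, y) ∈ F × G : x - y ∈ supp ρ}` is `∫_{supp ρ} |G ∩ (F - z)| dz`. The integrand is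
positive on an open set (continuity of translations in measure) that is nonempty (its integral
over all `z` is `|F| |G| > 0`) and contained in `B_ε`, where `supp ρ` charges every open set.
-/

open MeasureTheory Metric Set Filter
open scoped ENNReal Topology

noncomputable section

/-- The Gagliardo perimeter of a set `A` with respect to a kernel `ρ`:
`𝔓(A) = 2 ∫_A ∫_{Aᶜ} ρ(x-y)/|x-y| dy dx`. -/
def gagPer {d : ℕ} (ρ : EuclideanSpace ℝ (Fin d) → ℝ≥0∞)
    (A : Set (EuclideanSpace ℝ (Fin d))) : ℝ≥0∞ :=
  2 * ∫⁻ x in A, ∫⁻ y in Aᶜ, ρ (x - y) / edist x y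

/-- The support of the Lebesgue measure restricted to `A`. -/
def measSupp {d : ℕ} (A : Set (EuclideanSpace ℝ (Fin d))) : Set (EuclideanSpace ℝ (Fin d)) :=
  {x | ∀ r : ℝ, 0 < r → 0 < volume (A ∩ ball x r)}

/-- A finite-horizon kernel with horizon `ε`: a measurable function whose essential
support equals the closed ball of radius `ε` centered at the origin. -/
def IsFiniteHorizonKernel {d : ℕ} (ε : ℝ) (ρ : EuclideanSpace ℝ (Fin d) → ℝ≥0∞) : Prop :=
  Measurable ρ ∧
    measSupp (Function.support ρ) = closedBall (0 : EuclideanSpace ℝ (Fin d)) ε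

/-- The essential distance between two sets: the infimum of distances between points in the
supports of the restricted Lebesgue measures. -/
def essDist {d : ℕ} (F₁ F₂ : Set (EuclideanSpace ℝ (Fin d))) : ℝ≥0∞ :=
  ⨅ x ∈ measSupp F₁, ⨅ y ∈ measSupp F₂, edist x y

/-- `ε`-decomposability of a set with respect to the Gagliardo perimeter associated to `ρ`. -/
def epsDecomposable {d : ℕ} (ρ : EuclideanSpace ℝ (Fin d) → ℝ≥0∞)
    (A : Set (EuclideanSpace ℝ (Fin d))) : Prop :=
  ∃ E₁ E₂ : Set (EuclideanSpace ℝ (Fin d)), MeasurableSet E₁ ∧ MeasurableSet E₂ ∧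
    E₁ ∪ E₂ = A ∧ Disjoint E₁ E₂ ∧ 0 < volume E₁ ∧ 0 < volume E₂ ∧
    gagPer ρ E₁ < ⊤ ∧ gagPer ρ E₂ < ⊤ ∧ gagPer ρ A = gagPer ρ E₁ + gagPer ρ E₂

open scoped symmDiff

section TranslationOverlap

variable {G : Type*} [AddCommGroup G] [MeasurableSpace G] (μ : Measure G)

theorem measure_prod_sub_preimage_eq_setLIntegral [MeasurableAdd₂ G] [MeasurableNeg G] [SFinite μ]
    [μ.IsAddRightInvariant] {s t S : Set G} (hs : MeasurableSet s) (ht : MeasurableSet t)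
    (hS : MeasurableSet S) :
    μ.prod μ (s ×ˢ t ∩ (fun p => p.1 - p.2) ⁻¹' S) =
      ∫⁻ z in S, μ ((fun y => z + y) ⁻¹' s ∩ t) ∂μ := by
  have hQ : MeasurableSet {p : G × G | p.1 + p.2 ∈ s ∧ p.2 ∈ t} :=
    (measurable_add hs).inter (measurable_snd ht)
  have hP : MeasurableSet (s ×ˢ t ∩ (fun p : G × G => p.1 - p.2) ⁻¹' S) :=
    (hs.prod ht).inter (measurable_sub hS)
  have hpre : (fun p : G × G => (p.1 + p.2, p.2)) ⁻¹' (s ×ˢ t ∩ (fun p => p.1 - p.2) ⁻¹' S) =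
      {p : G × G | p.1 + p.2 ∈ s ∧ p.2 ∈ t} ∩ S ×ˢ univ := by
    ext p
    simp [and_assoc]
  rw [← (measurePreserving_add_prod μ μ).measure_preimage hP.nullMeasurableSet, hpre,
    ← Measure.restrict_apply hQ, ← Measure.restrict_prod_eq_prod_univ, Measure.prod_apply hQ]
  rfl

theorem measurable_measure_preimage_add_inter [MeasurableAdd₂ G] [SFinite μ] {s t : Set G}
    (hs : MeasurableSet s) (ht : MeasurableSet t) :
    Measurable fun z => μ ((fun y => z + y) ⁻¹' s ∩ t) :=
  measurable_measure_prodMk_left ((measurable_add hs).inter (measurable_snd ht))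

theorem exists_measure_preimage_add_inter_pos [MeasurableAdd₂ G] [MeasurableNeg G] [SFinite μ]
    [μ.IsAddRightInvariant] {s t : Set G} (hs : MeasurableSet s) (ht : MeasurableSet t)
    (hs₀ : μ s ≠ 0) (ht₀ : μ t ≠ 0) :
    ∃ z, 0 < μ ((fun y => z + y) ⁻¹' s ∩ t) := by
  have hint : ∫⁻ z, μ ((fun y => z + y) ⁻¹' s ∩ t) ∂μ = μ s * μ t := by
    rw [← setLIntegral_univ, ← measure_prod_sub_preimage_eq_setLIntegral μ hs ht MeasurableSet.univ,
      preimage_univ, inter_univ, Measure.prod_prod]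
  by_contra! hzero
  refine mul_ne_zero hs₀ ht₀ ?_
  rw [← hint]
  exact (lintegral_congr fun z => nonpos_iff_eq_zero.1 (hzero z)).trans lintegral_zero

/-- A Steinhaus-type statement: translation is continuous in measure. -/
theorem isOpen_setOf_measure_preimage_add_inter_pos [TopologicalSpace G]
    [IsTopologicalAddGroup G] [BorelSpace G] [μ.IsAddLeftInvariant] [IsLocallyFiniteMeasure μ]
    [μ.InnerRegularCompactLTTop] {s : Set G} (hs : NullMeasurableSet s μ) (hμs : μ s ≠ ∞)
    (t : Set G) :
    IsOpen {z | 0 < μ ((fun y => z + y) ⁻¹' s ∩ t)} := by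
  refine isOpen_iff_mem_nhds.2 fun z₀ (hz₀ : 0 < μ ((fun y => z₀ + y) ⁻¹' s ∩ t)) => ?_
  let add : C(G × G, G) := ⟨fun p => p.1 + p.2, continuous_add⟩
  have hsymm := tendsto_measure_symmDiff_preimage_nhds_zero (add.curry.continuous.tendsto z₀)
    (.of_forall (measurePreserving_add_left μ)) (measurePreserving_add_left μ z₀) hs hμs
  filter_upwards [hsymm.eventually (gt_mem_nhds hz₀)] with z hz
  rw [pos_iff_ne_zero]
  intro hzero
  refine hz.not_ge ?_
  calc μ ((fun y => z₀ + y) ⁻¹' s ∩ t)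
      ≤ μ (((fun y => z + y) ⁻¹' s ∩ t) ∪
          (((fun y => z + y) ⁻¹' s) ∆ ((fun y => z₀ + y) ⁻¹' s))) :=
        measure_mono fun y ⟨hy, hyt⟩ => by
          by_cases h : z + y ∈ s
          · exact Or.inl ⟨h, hyt⟩
          · exact Or.inr (Or.inr ⟨hy, h⟩)
    _ ≤ _ := (measure_union_le _ _).trans_eq (by rw [hzero, zero_add]; rfl)

end TranslationOverlap

variable {d : ℕ}

theorem measSupp_eq_support_restrict (A : Set (EuclideanSpace ℝ (Fin d))) :
    measSupp A = (volume.restrict A).support := by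
  ext x
  rw [nhds_basis_ball.mem_measureSupport]
  refine forall₂_congr fun r _ => ?_
  rw [Measure.restrict_apply measurableSet_ball, inter_comm]

theorem measure_diff_measSupp (A : Set (EuclideanSpace ℝ (Fin d))) :
    volume (A \ measSupp A) = 0 := by
  have h := (volume.restrict A).measure_compl_support
  rwa [Measure.restrict_apply Measure.isClosed_support.isOpen_compl.measurableSet,
    ← measSupp_eq_support_restrict, inter_comm, ← sdiff_eq] at h

theorem essDist_comm (F G : Set (EuclideanSpace ℝ (Fin d))) : essDist F G = essDist G F := by
  unfold essDist
  rw [iInf₂_comm]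
  simp_rw [edist_comm]

theorem ofReal_le_essDist_iff {ε : ℝ} {F G : Set (EuclideanSpace ℝ (Fin d))} :
    ENNReal.ofReal ε ≤ essDist F G ↔ ∀ x ∈ measSupp F, ∀ y ∈ measSupp G, ε ≤ dist x y := by
  simp only [essDist, le_iInf_iff, edist_dist, ENNReal.ofReal_le_ofReal_iff dist_nonneg]

theorem measure_prod_sub_preimage_eq_zero_of_le_dist {ε : ℝ}
    {S F G : Set (EuclideanSpace ℝ (Fin d))} (hS : volume (S \ ball 0 ε) = 0)
    (hFG : ∀ x ∈ measSupp F, ∀ y ∈ measSupp G, ε ≤ dist x y) :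
    volume.prod volume (F ×ˢ G ∩ (fun p => p.1 - p.2) ⁻¹' S) = 0 := by
  refine measure_mono_null (t := (F \ measSupp F) ×ˢ univ ∪ univ ×ˢ (G \ measSupp G) ∪
    (fun p => p.1 - p.2) ⁻¹' (S \ ball 0 ε)) ?_ ?_
  · rintro ⟨x, y⟩ ⟨⟨hx, hy⟩, hxy⟩
    by_cases hx' : x ∈ measSupp F
    · by_cases hy' : y ∈ measSupp G
      · refine Or.inr ⟨hxy, fun h => ?_⟩
        rw [mem_ball, dist_zero_right, ← dist_eq_norm] at h
        exact (hFG x hx' y hy').not_gt h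
      · exact Or.inl (Or.inr ⟨trivial, hy, hy'⟩)
    · exact Or.inl (Or.inl ⟨⟨hx, hx'⟩, trivial⟩)
  · refine measure_union_null (measure_union_null ?_ ?_)
      ((quasiMeasurePreserving_sub volume volume).preimage_null hS)
    · rw [Measure.prod_prod, measure_diff_measSupp, zero_mul]
    · rw [Measure.prod_prod, measure_diff_measSupp, mul_zero]

theorem le_dist_of_measure_prod_sub_preimage_eq_zero {ε : ℝ}
    {S F G : Set (EuclideanSpace ℝ (Fin d))} (hS : MeasurableSet S)
    (hSε : ball 0 ε ⊆ measSupp S) (hF : MeasurableSet F) (hG : MeasurableSet G)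
    (hP : volume.prod volume (F ×ˢ G ∩ (fun p => p.1 - p.2) ⁻¹' S) = 0)
    {x₀ y₀ : EuclideanSpace ℝ (Fin d)} (hx₀ : x₀ ∈ measSupp F) (hy₀ : y₀ ∈ measSupp G) :
    ε ≤ dist x₀ y₀ := by
  by_contra! hlt
  set δ := (ε - dist x₀ y₀) / 2
  have hδ : 0 < δ := half_pos (sub_pos.2 hlt)
  set F' := F ∩ ball x₀ δ
  set G' := G ∩ ball y₀ δ
  have hF' : MeasurableSet F' := hF.inter measurableSet_ball
  have hG' : MeasurableSet G' := hG.inter measurableSet_ball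
  set φ := fun z => volume ((fun y => z + y) ⁻¹' F' ∩ G')
  obtain ⟨z₁, hz₁⟩ := exists_measure_preimage_add_inter_pos volume hF' hG'
    (hx₀ δ hδ).ne' (hy₀ δ hδ).ne'
  have hz₁ε : z₁ ∈ ball 0 ε := by
    obtain ⟨y, ⟨hxF, hxB⟩, -, hyB⟩ := nonempty_of_measure_ne_zero hz₁.ne'
    rw [mem_ball, dist_zero_right]
    calc ‖z₁‖ = dist (z₁ + y) y := by rw [dist_eq_norm, add_sub_cancel_right]
      _ ≤ dist (z₁ + y) x₀ + dist x₀ y₀ + dist y₀ y := dist_triangle4 _ _ _ _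
      _ < δ + dist x₀ y₀ + δ := by
        gcongr
        · exact hxB
        · exact mem_ball'.1 hyB
      _ = ε := by ring
  obtain ⟨r, hr, hball⟩ := Metric.isOpen_iff.1 (isOpen_setOf_measure_preimage_add_inter_pos
    volume hF'.nullMeasurableSet (measure_ball_lt_top.trans_le' (measure_mono
      inter_subset_right)).ne G') z₁ hz₁
  have hpos : 0 < ∫⁻ z in S, φ z := by
    rw [setLIntegral_pos_iff (measurable_measure_preimage_add_inter volume hF' hG')]
    calc 0 < volume (S ∩ ball z₁ r) := hSε hz₁ε r hr
      _ ≤ volume (Function.support φ ∩ S) := by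
        rw [inter_comm]
        exact measure_mono (inter_subset_inter_left _ fun z hz => (hball hz).ne')
  refine hpos.ne' ?_
  rw [← measure_prod_sub_preimage_eq_setLIntegral volume hF' hG' hS]
  exact measure_mono_null
    (inter_subset_inter_left _ (prod_mono inter_subset_left inter_subset_left)) hP

def interaction (ρ : EuclideanSpace ℝ (Fin d) → ℝ≥0∞) (F G : Set (EuclideanSpace ℝ (Fin d))) :
    ℝ≥0∞ :=
  ∫⁻ x in F, ∫⁻ y in G, ρ (x - y) / edist x y

section Interaction

variable {ρ : EuclideanSpace ℝ (Fin d) → ℝ≥0∞}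

theorem measurable_div_edist_sub (hρ : Measurable ρ) :
    Measurable fun p : EuclideanSpace ℝ (Fin d) × EuclideanSpace ℝ (Fin d) =>
      ρ (p.1 - p.2) / edist p.1 p.2 :=
  (hρ.comp (measurable_fst.sub measurable_snd)).div (measurable_fst.edist measurable_snd)

theorem interaction_union_left {F₁ F₂ : Set (EuclideanSpace ℝ (Fin d))} (h₂ : MeasurableSet F₂)
    (hd : Disjoint F₁ F₂) (G : Set (EuclideanSpace ℝ (Fin d))) :
    interaction ρ (F₁ ∪ F₂) G = interaction ρ F₁ G + interaction ρ F₂ G :=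
  lintegral_union h₂ hd

theorem interaction_union_right (hρ : Measurable ρ) (F : Set (EuclideanSpace ℝ (Fin d)))
    {G₁ G₂ : Set (EuclideanSpace ℝ (Fin d))} (h₂ : MeasurableSet G₂) (hd : Disjoint G₁ G₂) :
    interaction ρ F (G₁ ∪ G₂) = interaction ρ F G₁ + interaction ρ F G₂ := by
  have hG₁ : Measurable fun x => ∫⁻ y in G₁, ρ (x - y) / edist x y :=
    (measurable_div_edist_sub hρ).lintegral_prod_right'
  unfold interaction
  rw [← lintegral_add_left hG₁]
  exact lintegral_congr fun x => lintegral_union h₂ hd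

theorem gagPer_add_gagPer (hρ : Measurable ρ) {E₁ E₂ : Set (EuclideanSpace ℝ (Fin d))}
    (h₁ : MeasurableSet E₁) (h₂ : MeasurableSet E₂) (hd : Disjoint E₁ E₂) :
    gagPer ρ E₁ + gagPer ρ E₂ =
      gagPer ρ (E₁ ∪ E₂) + 2 * (interaction ρ E₁ E₂ + interaction ρ E₂ E₁) := by
  have hc₁ : E₁ᶜ = (E₁ ∪ E₂)ᶜ ∪ E₂ := by
    rw [compl_union, ← sdiff_eq, sdiff_union_of_subset hd.subset_compl_left]
  have hc₂ : E₂ᶜ = (E₁ ∪ E₂)ᶜ ∪ E₁ := by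
    rw [compl_union, inter_comm, ← sdiff_eq, sdiff_union_of_subset hd.subset_compl_right]
  have hd₁ : Disjoint (E₁ ∪ E₂)ᶜ E₂ := disjoint_compl_left_iff_subset.2 subset_union_right
  have hd₂ : Disjoint (E₁ ∪ E₂)ᶜ E₁ := disjoint_compl_left_iff_subset.2 subset_union_left
  change 2 * interaction ρ E₁ E₁ᶜ + 2 * interaction ρ E₂ E₂ᶜ =
    2 * interaction ρ (E₁ ∪ E₂) (E₁ ∪ E₂)ᶜ + _
  rw [hc₁, hc₂, interaction_union_right hρ E₁ h₂ hd₁, interaction_union_right hρ E₂ h₁ hd₂,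
    interaction_union_left h₂ hd]
  ring

theorem interaction_eq_zero_iff (hρ : Measurable ρ) {F G : Set (EuclideanSpace ℝ (Fin d))}
    (hF : MeasurableSet F) (hG : MeasurableSet G) :
    interaction ρ F G = 0 ↔
      volume.prod volume (F ×ˢ G ∩ (fun p => p.1 - p.2) ⁻¹' Function.support ρ) = 0 := by
  rw [interaction, ← setLIntegral_prod _ (measurable_div_edist_sub hρ).aemeasurable,
    setLIntegral_eq_zero_iff (hF.prod hG) (measurable_div_edist_sub hρ), ae_iff]
  congr! 2
  ext p
  simp [ENNReal.div_eq_zero_iff, edist_ne_top, and_assoc]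

end Interaction

theorem IsFiniteHorizonKernel.measure_support_diff_ball {ε : ℝ}
    {ρ : EuclideanSpace ℝ (Fin d) → ℝ≥0∞} (hρ : IsFiniteHorizonKernel ε ρ) (hε : ε ≠ 0) :
    volume (Function.support ρ \ ball 0 ε) = 0 := by
  refine measure_mono_null (t := (Function.support ρ \ measSupp (Function.support ρ)) ∪
    sphere 0 ε) (fun z ⟨hz, hzε⟩ => ?_)
    (measure_union_null (measure_diff_measSupp _) (Measure.addHaar_sphere_of_ne_zero _ _ hε))
  by_cases hz' : z ∈ measSupp (Function.support ρ)
  · rw [hρ.2] at hz'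
    exact Or.inr (mem_sphere.2 (le_antisymm (mem_closedBall.1 hz') (not_lt.1 hzε)))
  · exact Or.inl ⟨hz, hz'⟩

theorem IsFiniteHorizonKernel.interaction_eq_zero_iff_le_essDist {ε : ℝ}
    {ρ : EuclideanSpace ℝ (Fin d) → ℝ≥0∞} (hρ : IsFiniteHorizonKernel ε ρ) (hε : ε ≠ 0)
    {F G : Set (EuclideanSpace ℝ (Fin d))} (hF : MeasurableSet F) (hG : MeasurableSet G) :
    interaction ρ F G = 0 ↔ ENNReal.ofReal ε ≤ essDist F G := by
  rw [interaction_eq_zero_iff hρ.1 hF hG, ofReal_le_essDist_iff]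
  refine ⟨fun h x hx y hy => ?_, measure_prod_sub_preimage_eq_zero_of_le_dist
    (hρ.measure_support_diff_ball hε)⟩
  exact le_dist_of_measure_prod_sub_preimage_eq_zero (measurableSet_support hρ.1)
    (hρ.2 ▸ ball_subset_closedBall) hF hG h hx hy

theorem statement0_general (d : ℕ) (ε : ℝ) (hε : 0 < ε)
    (ρ : EuclideanSpace ℝ (Fin d) → ℝ≥0∞) (hρ : IsFiniteHorizonKernel ε ρ)
    (A : Set (EuclideanSpace ℝ (Fin d)))
    (hfin : gagPer ρ A < ⊤) :
    epsDecomposable ρ A ↔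
      ∃ E₁ E₂ : Set (EuclideanSpace ℝ (Fin d)), MeasurableSet E₁ ∧ MeasurableSet E₂ ∧
        E₁ ∪ E₂ = A ∧ Disjoint E₁ E₂ ∧ 0 < volume E₁ ∧ 0 < volume E₂ ∧
        ENNReal.ofReal ε ≤ essDist E₁ E₂ := by
  constructor
  · rintro ⟨E₁, E₂, h₁, h₂, rfl, hd, hv₁, hv₂, -, -, hsum⟩
    have hsplit := gagPer_add_gagPer hρ.1 h₁ h₂ hd
    have hzero : 2 * (interaction ρ E₁ E₂ + interaction ρ E₂ E₁) = 0 :=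
      (ENNReal.add_right_inj hfin.ne).1 (by rw [add_zero, ← hsplit, hsum])
    have h₁₂ := (add_eq_zero.1 ((mul_eq_zero.1 hzero).resolve_left two_ne_zero)).1
    exact ⟨E₁, E₂, h₁, h₂, rfl, hd, hv₁, hv₂,
      (hρ.interaction_eq_zero_iff_le_essDist hε.ne' h₁ h₂).1 h₁₂⟩
  · rintro ⟨E₁, E₂, h₁, h₂, rfl, hd, hv₁, hv₂, hdist⟩
    have h₁₂ := (hρ.interaction_eq_zero_iff_le_essDist hε.ne' h₁ h₂).2 hdist
    have h₂₁ :=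
      (hρ.interaction_eq_zero_iff_le_essDist hε.ne' h₂ h₁).2 (essDist_comm E₁ E₂ ▸ hdist)
    have hsum := gagPer_add_gagPer hρ.1 h₁ h₂ hd
    rw [h₁₂, h₂₁, add_zero, mul_zero, add_zero] at hsum
    refine ⟨E₁, E₂, h₁, h₂, rfl, hd, hv₁, hv₂, ?_, ?_, hsum.symm⟩
    · exact (le_self_add.trans hsum.le).trans_lt hfin
    · exact (le_add_self.trans hsum.le).trans_lt hfin

/-- A set of finite `𝔓_ε`-perimeter is `ε`-decomposable iff it admits a partition into two
sets of positive measure whose essential distance is at least `ε`. -/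
theorem statement0 (d : ℕ) (hd : 1 ≤ d) (ε : ℝ) (hε : 0 < ε)
    (ρ : EuclideanSpace ℝ (Fin d) → ℝ≥0∞) (hρ : IsFiniteHorizonKernel ε ρ)
    (A : Set (EuclideanSpace ℝ (Fin d))) (hA : MeasurableSet A)
    (hfin : gagPer ρ A < ⊤) :
    epsDecomposable ρ A ↔
      ∃ E₁ E₂ : Set (EuclideanSpace ℝ (Fin d)), MeasurableSet E₁ ∧ MeasurableSet E₂ ∧
        E₁ ∪ E₂ = A ∧ Disjoint E₁ E₂ ∧ 0 < volume E₁ ∧ 0 < volume E₂ ∧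
        ENNReal.ofReal ε ≤ essDist E₁ E₂ :=
  statement0_general d ε hε ρ hρ A hfin

end
end

section
/- Let ε > 0 and ρ_ε a radial finite-horizon kernel with ∫_{ℝ^d} ρ_ε(h) dh = 1. Then lim_{δ→0⁺} 𝔓_ε(B_δ(0)) = 0, where B_δ(0) is the ball of radius δ centered at the origin. -/
/-!
Substituting `y = x - h` and swapping the integrals gives
`𝔓(A) = 2 ∫ |A \ (h + A)| ρ(h) / |h| dh`. For `A = B_δ` the set `B_δ \ (h + B_δ)` lies in the
annulus `B_δ \ B_{δ - |h|}`, whose volume is at most `|B_δ|`, and at most `d |h| |B_1|` when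
`δ ≤ 1`. The first bound sends the integrand to `0` pointwise as `δ → 0`, the second dominates it
by the integrable `d |B_1| ρ`, so dominated convergence concludes. In dimension `0` every ball of
positive radius is the whole space, whose perimeter vanishes.
-/

open MeasureTheory Metric Set Filter
open scoped ENNReal Topology

noncomputable section

open scoped Pointwise

theorem gagPer_eq_lintegral_measure_diff_vadd {d : ℕ} {ρ : EuclideanSpace ℝ (Fin d) → ℝ≥0∞}
    (hρ : Measurable ρ) {A : Set (EuclideanSpace ℝ (Fin d))} (hA : MeasurableSet A) :
    gagPer ρ A = (2 : ℝ≥0∞) * ∫⁻ h, volume (A \ (h +ᵥ A)) * (ρ h / ‖h‖ₑ) := by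
  have hinner : ∀ x, ∫⁻ y in Aᶜ, ρ (x - y) / edist x y
      = ∫⁻ h, Aᶜ.indicator (fun _ => 1) (x - h) * (ρ h / ‖h‖ₑ) := fun x => by
    rw [← lintegral_indicator hA.compl, ← lintegral_sub_left_eq_self _ x]
    congr 1 with h
    by_cases hx : x - h ∈ Aᶜ <;> simp [hx, edist_eq_enorm_sub]
  have hF : Measurable (Function.uncurry fun x h : EuclideanSpace ℝ (Fin d) =>
      Aᶜ.indicator (fun _ => 1) (x - h) * (ρ h / ‖h‖ₑ)) :=
    ((measurable_one.indicator hA.compl).comp (measurable_fst.sub measurable_snd)).mul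
      ((hρ.div measurable_enorm).comp measurable_snd)
  unfold gagPer
  simp_rw [hinner]
  rw [lintegral_lintegral_swap hF.aemeasurable]
  congr 2 with h
  have hpre : (· - h) ⁻¹' Aᶜ = (h +ᵥ A)ᶜ := by
    ext x; simp [Set.mem_vadd_set_iff_neg_vadd_mem, neg_add_eq_sub]
  have hAh : MeasurableSet (h +ᵥ A)ᶜ := (hA.const_vadd h).compl
  simp_rw [← Set.indicator_comp_right (· - h), hpre, Function.comp_def]
  rw [lintegral_mul_const _ (measurable_const.indicator hAh), lintegral_indicator_const hAh,
    one_mul, Measure.restrict_apply hAh, Set.sdiff_eq, Set.inter_comm]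

theorem gagPer_univ {d : ℕ} (ρ : EuclideanSpace ℝ (Fin d) → ℝ≥0∞) : gagPer ρ univ = 0 := by
  simp [gagPer]

theorem pow_sub_pow_le_mul_sub {a b : ℝ} (hb : 0 ≤ b) (hba : b ≤ a) (ha : a ≤ 1) (n : ℕ) :
    a ^ n - b ^ n ≤ n * (a - b) :=
  calc a ^ n - b ^ n ≤ |a ^ n - b ^ n| := le_abs_self _
    _ ≤ |a - b| * n * max |a| |b| ^ (n - 1) := abs_pow_sub_pow_le a b n
    _ ≤ |a - b| * n * 1 := by
      have hmax : max |a| |b| ≤ 1 := by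
        rw [abs_of_nonneg hb, abs_of_nonneg (hb.trans hba)]
        exact max_le ha (hba.trans ha)
      gcongr
      exact pow_le_one₀ (by positivity) hmax
    _ = n * (a - b) := by rw [abs_of_nonneg (sub_nonneg.2 hba)]; ring

theorem measure_ball_diff_ball_le {X : Type*} [PseudoMetricSpace X] [ProperSpace X]
    [MeasurableSpace X] [OpensMeasurableSpace X] (μ : Measure X) [IsFiniteMeasureOnCompacts μ]
    (x y : X) (δ : ℝ) : μ (ball x δ \ ball y δ) ≤ μ (ball x δ) - μ (ball x (δ - dist x y)) :=
  calc μ (ball x δ \ ball y δ) ≤ μ (ball x δ \ ball x (δ - dist x y)) :=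
        measure_mono (sdiff_subset_sdiff_right (ball_subset_ball' (by rw [sub_add_cancel])))
    _ = μ (ball x δ) - μ (ball x (δ - dist x y)) :=
        measure_sdiff (ball_subset_ball (by linarith [dist_nonneg (x := x) (y := y)]))
          measurableSet_ball.nullMeasurableSet measure_ball_lt_top.ne

theorem tendsto_measure_ball_nhdsGT_zero {X : Type*} [MetricSpace X] [MeasurableSpace X]
    [OpensMeasurableSpace X] (μ : Measure X) [NullSingletonClass μ] (x : X)
    (hx : ∃ R > 0, μ (ball x R) ≠ ∞) : Tendsto (fun r => μ (ball x r)) (𝓝[>] 0) (𝓝 0) := by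
  simp_rw [← thickening_singleton] at hx ⊢
  simpa using tendsto_measure_thickening_of_isClosed hx isClosed_singleton

section AddHaar

variable {E : Type*} [NormedAddCommGroup E] [NormedSpace ℝ E] [MeasurableSpace E] [BorelSpace E]
  [FiniteDimensional ℝ E] [Nontrivial E] (μ : Measure E) [μ.IsAddHaarMeasure]

open Module

theorem addHaar_ball_sub_addHaar_ball_le (x : E) {δ t : ℝ} (hδ : 0 ≤ δ) (hδ₁ : δ ≤ 1)
    (ht : 0 ≤ t) :
    μ (ball x δ) - μ (ball x (δ - t)) ≤ finrank ℝ E * ENNReal.ofReal t * μ (ball 0 1) := by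
  have hn : 0 < finrank ℝ E := finrank_pos
  rw [Measure.addHaar_ball μ x hδ, ← ENNReal.ofReal_natCast, ← ENNReal.ofReal_mul (by positivity)]
  rcases le_total t δ with htδ | hδt
  · rw [Measure.addHaar_ball μ x (sub_nonneg.2 htδ),
      ← ENNReal.sub_mul fun _ _ => measure_ball_lt_top.ne,
      ← ENNReal.ofReal_sub _ (by positivity)]
    gcongr
    simpa using pow_sub_pow_le_mul_sub (sub_nonneg.2 htδ) (by linarith) hδ₁ (finrank ℝ E)
  · rw [ball_eq_empty.2 (sub_nonpos.2 hδt), measure_empty, tsub_zero]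
    gcongr
    calc δ ^ finrank ℝ E = δ ^ finrank ℝ E - 0 ^ finrank ℝ E := by rw [zero_pow hn.ne', sub_zero]
      _ ≤ finrank ℝ E * (δ - 0) := pow_sub_pow_le_mul_sub le_rfl hδ hδ₁ _
      _ ≤ finrank ℝ E * t := by gcongr; linarith

theorem tendsto_lintegral_addHaar_ball_sub_mul {ρ : E → ℝ≥0∞} (hρ : Measurable ρ)
    (hρ_fin : ∫⁻ h, ρ h ∂μ ≠ ∞) :
    Tendsto (fun δ => ∫⁻ h, (μ (ball 0 δ) - μ (ball 0 (δ - ‖h‖))) * (ρ h / ‖h‖ₑ) ∂μ)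
      (𝓝[>] 0) (𝓝 0) := by
  set C : ℝ≥0∞ := finrank ℝ E * μ (ball 0 1)
  have hC : C ≠ ∞ := ENNReal.mul_ne_top (ENNReal.natCast_ne_top _) measure_ball_lt_top.ne
  have hmono : Monotone fun r => μ (ball (0 : E) r) := fun _ _ hrs =>
    measure_mono (ball_subset_ball hrs)
  have hmeas : ∀ δ, Measurable fun h : E =>
      (μ (ball 0 δ) - μ (ball 0 (δ - ‖h‖))) * (ρ h / ‖h‖ₑ) := fun δ =>
    (measurable_const.sub (hmono.measurable.comp (measurable_const.sub measurable_norm))).mul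
      (hρ.div measurable_enorm)
  have hbound : ∀ᶠ δ in 𝓝[>] (0 : ℝ), ∀ h : E,
      (μ (ball 0 δ) - μ (ball 0 (δ - ‖h‖))) * (ρ h / ‖h‖ₑ) ≤ C * ρ h := by
    filter_upwards [Ioc_mem_nhdsGT zero_lt_one] with δ hδ h
    calc (μ (ball 0 δ) - μ (ball 0 (δ - ‖h‖))) * (ρ h / ‖h‖ₑ)
        ≤ finrank ℝ E * ENNReal.ofReal ‖h‖ * μ (ball 0 1) * (ρ h / ‖h‖ₑ) := by
          gcongr
          exact addHaar_ball_sub_addHaar_ball_le μ 0 hδ.1.le hδ.2 (norm_nonneg h)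
      _ = C * (‖h‖ₑ * (ρ h / ‖h‖ₑ)) := by rw [ofReal_norm]; ring
      _ ≤ C * ρ h := by gcongr; exact ENNReal.mul_div_le
  have hlim : ∀ᵐ h ∂μ, Tendsto (fun δ => (μ (ball 0 δ) - μ (ball 0 (δ - ‖h‖))) * (ρ h / ‖h‖ₑ))
      (𝓝[>] 0) (𝓝 0) := by
    filter_upwards [ae_lt_top hρ hρ_fin, Measure.ae_ne μ 0] with h hρh hh
    have hball := ENNReal.Tendsto.mul_const (tendsto_measure_ball_nhdsGT_zero μ (0 : E)
      ⟨1, one_pos, measure_ball_lt_top.ne⟩)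
      (Or.inr (ENNReal.div_lt_top hρh.ne (enorm_ne_zero.2 hh)).ne)
    rw [zero_mul] at hball
    exact tendsto_of_tendsto_of_tendsto_of_le_of_le tendsto_const_nhds hball
      (fun _ => zero_le) fun δ => by gcongr; exact tsub_le_self
  simpa using tendsto_lintegral_filter_of_dominated_convergence (fun h => C * ρ h)
    (Eventually.of_forall hmeas) (hbound.mono fun _ h => Eventually.of_forall h)
    (by rw [lintegral_const_mul _ hρ]; exact ENNReal.mul_ne_top hC hρ_fin) hlim

end AddHaar

theorem statement12_general (d : ℕ) (ε : ℝ)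
    (ρ : EuclideanSpace ℝ (Fin d) → ℝ≥0∞) (hρ : IsFiniteHorizonKernel ε ρ)
    (hnorm : (∫⁻ h, ρ h) = 1) :
    Tendsto (fun δ : ℝ => gagPer ρ (ball (0 : EuclideanSpace ℝ (Fin d)) δ))
      (𝓝[>] 0) (𝓝 0) := by
  obtain ⟨hρ_meas, -⟩ := hρ
  rcases d.eq_zero_or_pos with rfl | hd
  · refine tendsto_const_nhds.congr' ?_
    filter_upwards [self_mem_nhdsWithin] with δ (hδ : 0 < δ)
    rw [eq_univ_of_forall fun x => mem_ball.2 (by simpa [Subsingleton.elim x 0]), gagPer_univ]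
  have : Nonempty (Fin d) := ⟨⟨0, hd⟩⟩
  have hlim := ENNReal.Tendsto.const_mul
    (tendsto_lintegral_addHaar_ball_sub_mul volume hρ_meas (by simp [hnorm]))
    (a := 2) (Or.inr ENNReal.ofNat_ne_top)
  rw [mul_zero] at hlim
  refine tendsto_of_tendsto_of_tendsto_of_le_of_le tendsto_const_nhds hlim (fun _ => zero_le)
    fun δ => ?_
  rw [gagPer_eq_lintegral_measure_diff_vadd hρ_meas measurableSet_ball]
  gcongr with h
  rw [vadd_ball, vadd_eq_add, add_zero, ← dist_zero_left]
  exact measure_ball_diff_ball_le volume 0 h δ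

/-- The `𝔓_ε`-perimeter of balls vanishes as the radius goes to zero. -/
theorem statement12 (d : ℕ) (ε : ℝ) (hε : 0 < ε)
    (ρ : EuclideanSpace ℝ (Fin d) → ℝ≥0∞) (hρ : IsFiniteHorizonKernel ε ρ)
    (hrad : ∀ x y : EuclideanSpace ℝ (Fin d), ‖x‖ = ‖y‖ → ρ x = ρ y)
    (hnorm : (∫⁻ h, ρ h) = 1) :
    Tendsto (fun δ : ℝ => gagPer ρ (ball (0 : EuclideanSpace ℝ (Fin d)) δ))
      (𝓝[>] 0) (𝓝 0) :=
  statement12_general d ε ρ hρ hnorm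

end
end
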